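/- arXiv:0805.0667 — 2 statements merged into one kernel-verified Lean document; each statement's English description precedes it below -/
import Mathlib

section
/- For any odd integer k ≥ 3, the ratio log(k)/log(k/2) is irrational. -/
theorem log_ratio_irrational_of_odd (k : ℕ) (hk : Odd k) (hk3 : 3 ≤ k) :
    Irrational (Real.log k / Real.log ((k : ℝ) / 2)) := by
  rintro ⟨q, hq⟩
  have hk1 : (1 : ℝ) < (k : ℝ) / 2 := by
    have : (3 : ℝ) ≤ (k : ℝ) := by exact_mod_cast hk3
    linarith
  have hkk : (1 : ℝ) < (k : ℝ) := by linarith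
  have hM : 0 < Real.log ((k : ℝ) / 2) := Real.log_pos hk1
  have hML : Real.log ((k : ℝ) / 2) < Real.log k := by
    apply Real.log_lt_log (by linarith); linarith
  have hL : 0 < Real.log k := lt_trans hM hML
  have hq1 : (1 : ℝ) < (q : ℝ) := by
    rw [hq, lt_div_iff₀ hM]; linarith
  have hqM : (q : ℝ) * Real.log ((k : ℝ) / 2) = Real.log k := by
    rw [hq]; field_simp
  have hMsplit : Real.log ((k : ℝ) / 2) = Real.log k - Real.log 2 := by
    rw [Real.log_div (by positivity) (by norm_num)]
  have hdenpos : (0 : ℚ) < (q.den : ℚ) := by exact_mod_cast q.pos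
  have hq1' : (1 : ℚ) < q := by exact_mod_cast hq1
  have hnumden : (q.den : ℤ) < q.num := by
    have h : (q.den : ℚ) * 1 < (q.den : ℚ) * q := by
      exact mul_lt_mul_of_pos_left hq1' hdenpos
    rw [mul_one, mul_comm, Rat.mul_den_eq_num] at h
    exact_mod_cast h
  have hdenZ : (0 : ℤ) < (q.den : ℤ) := by exact_mod_cast q.pos
  have hnumpos : (0 : ℤ) < q.num := lt_trans hdenZ hnumden
  have hqnum : (q.num : ℝ) * Real.log ((k : ℝ) / 2) = (q.den : ℝ) * Real.log k := by
    have hden : (q.den : ℝ) ≠ 0 := by positivity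
    have h2 : ((q.num : ℝ) / (q.den : ℝ)) * Real.log ((k : ℝ) / 2) = Real.log k := by
      rw [← Rat.cast_def]; exact hqM
    field_simp at h2
    linarith
  set n : ℕ := (q.num - q.den).toNat with hn
  set m : ℕ := q.num.toNat with hm
  have hnZ : (n : ℤ) = q.num - q.den := Int.toNat_of_nonneg (by omega)
  have hmZ : (m : ℤ) = q.num := Int.toNat_of_nonneg (by omega)
  have hnpos : 0 < n := by omega
  have hmpos : 0 < m := by omega
  have key : (n : ℝ) * Real.log k = (m : ℝ) * Real.log 2 := by
    have hnR : (n : ℝ) = (q.num : ℝ) - (q.den : ℝ) := by exact_mod_cast hnZ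
    have hmR : (m : ℝ) = (q.num : ℝ) := by exact_mod_cast hmZ
    rw [hnR, hmR]
    rw [hMsplit] at hqnum
    ring_nf at hqnum ⊢
    linarith
  have hlogeq : Real.log ((k : ℝ) ^ n) = Real.log ((2 : ℝ) ^ m) := by
    rw [Real.log_pow, Real.log_pow]; exact_mod_cast key
  have hpow : (k : ℝ) ^ n = (2 : ℝ) ^ m := by
    have h := congrArg Real.exp hlogeq
    rwa [Real.exp_log (by positivity), Real.exp_log (by positivity)] at h
  have hpowN : k ^ n = 2 ^ m := by exact_mod_cast hpow
  have hodd : Odd (k ^ n) := hk.pow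
  have heven : Even (2 ^ m) := by rw [Nat.even_pow]; exact ⟨even_two, by omega⟩
  rw [hpowN] at hodd
  exact (Nat.not_odd_iff_even.mpr heven) hodd
end

section
/- Let φ = (√5 − 1)/2. Then log((√5−1)/4) / log((√5−1)²/8) is irrational. -/
/-!
With `φ = (1 + √5)/2` the two arguments are `(2φ)⁻¹` and `(2φ²)⁻¹`. A rational ratio of logarithms
`log a / log b = p/q` forces the multiplicative relation `a ^ q = b ^ p`, which here reads
`φ ^ (q - 2p) = 2 ^ (p - q)`. Every nonzero integer power of `φ` is irrational, because
`φ ^ (n + 1) = φ F(n+1) + F(n)` with Fibonacci numbers `F`, so `q = 2p` and `p = q`, i.e. `q = 0`.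
-/

open Real goldenRatio

theorem irrational_log_div_log {a b : ℝ} (ha : 0 < a) (hb : 0 < b) (hb₁ : b ≠ 1)
    (h : ∀ m n : ℤ, a ^ m = b ^ n → m = 0) : Irrational (log a / log b) := by
  rintro ⟨r, hr⟩
  have hlogb : log b ≠ 0 := log_ne_zero_of_pos_of_ne_one hb hb₁
  have hnum : (r.num : ℝ) * log b = r.den * log a := by
    rw [← Rat.num_div_den r, Rat.cast_div] at hr
    push_cast at hr
    field_simp at hr
    linarith
  have hpow : a ^ (r.den : ℤ) = b ^ r.num := by
    apply log_injOn_pos (zpow_pos ha _) (zpow_pos hb _)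
    rw [log_zpow, log_zpow]
    exact_mod_cast hnum.symm
  exact r.den_nz (by exact_mod_cast h _ _ hpow)

namespace Real

theorem irrational_goldenRatio_pow {n : ℕ} (hn : n ≠ 0) : Irrational (φ ^ n) := by
  obtain ⟨n, rfl⟩ := Nat.exists_eq_succ_of_ne_zero hn
  rw [← goldenRatio_mul_fib_succ_add_fib]
  exact (goldenRatio_irrational.mul_natCast (Nat.fib_pos.mpr n.succ_pos).ne').add_natCast _

theorem irrational_goldenRatio_zpow {n : ℤ} (hn : n ≠ 0) : Irrational (φ ^ n) := by
  obtain ⟨n, rfl | rfl⟩ := n.eq_nat_or_neg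
  · exact_mod_cast irrational_goldenRatio_pow (by omega)
  · rw [zpow_neg, zpow_natCast]
    exact (irrational_goldenRatio_pow (by omega)).inv

theorem goldenRatio_zpow_eq_two_zpow_iff {k j : ℤ} : φ ^ k = 2 ^ j ↔ k = 0 ∧ j = 0 := by
  refine ⟨fun h ↦ ?_, fun ⟨hk, hj⟩ ↦ by simp [hk, hj]⟩
  have hk : k = 0 := by
    by_contra hk
    exact (irrational_goldenRatio_zpow hk).ne_rat (2 ^ j) (by rw [h]; push_cast; rfl)
  subst hk
  exact ⟨rfl, ((zpow_eq_one_iff_right₀ zero_le_two (by norm_num)).mp h.symm)⟩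

theorem eq_zero_of_two_mul_goldenRatio_zpow_eq {m n : ℤ}
    (h : (2 * φ) ^ m = (2 * φ ^ 2) ^ n) : m = 0 := by
  have hrel : φ ^ (m - 2 * n) = 2 ^ (n - m) := by
    rw [mul_zpow, mul_zpow, ← zpow_natCast φ 2, ← zpow_mul] at h
    rw [zpow_sub₀ goldenRatio_ne_zero, zpow_sub₀ two_ne_zero, div_eq_div_iff
      (zpow_ne_zero _ goldenRatio_ne_zero) (zpow_ne_zero _ two_ne_zero)]
    push_cast at h
    linear_combination h
  obtain ⟨h₁, h₂⟩ := goldenRatio_zpow_eq_two_zpow_iff.mp hrel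
  omega

end Real

theorem log_ratio_golden_irrational :
    Irrational (Real.log ((Real.sqrt 5 - 1) / 4) /
      Real.log ((Real.sqrt 5 - 1) ^ 2 / 8)) := by
  have ha : (√5 - 1) / 4 = (2 * φ)⁻¹ := by
    rw [mul_inv, inv_goldenRatio]; ring
  have hb : (√5 - 1) ^ 2 / 8 = (2 * φ ^ 2)⁻¹ := by
    rw [mul_inv, ← inv_pow, inv_goldenRatio]; ring
  rw [ha, hb, log_inv, log_inv, neg_div_neg_eq]
  have hb₁ : 2 * φ ^ 2 ≠ 1 := by nlinarith [one_lt_goldenRatio]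
  exact irrational_log_div_log (by positivity) (by positivity) hb₁
    fun _ _ ↦ eq_zero_of_two_mul_goldenRatio_zpow_eq
end
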